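/- arXiv:1305.6588 — 3 statements merged into one kernel-verified Lean document; each statement's English description precedes it below -/
import Mathlib

section
/- Let 0 < α < β and p₁, p₂ > 0 with p₁ + p₂ = 1. Then for all n ≥ 1 and all ω ∈ [0,1], x_n^α ≤ x_n(ω) ≤ x_n^β. -/
noncomputable section

open Real MeasureTheory Set Filter

/-- The LSV map `T_γ` on `[0,1]`: `x(1+2^γ x^γ)` on `[0,1/2]`, `2x-1` on `(1/2,1]`. -/
noncomputable def lsv (γ : ℝ) (x : ℝ) : ℝ :=
  if x ≤ 1 / 2 then x * (1 + 2 ^ γ * x ^ γ) else 2 * x - 1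

/-- The left branch of the LSV map. -/
noncomputable def lsvLeft (γ : ℝ) (x : ℝ) : ℝ := x * (1 + 2 ^ γ * x ^ γ)

/-- The random parameter selection: `α` for `ω ∈ [0,p₁)`, `β` for `ω ∈ [p₁,1]`. -/
noncomputable def sel (α β p₁ : ℝ) (ω : ℝ) : ℝ := if ω < p₁ then α else β

/-- The randomizing map `φ` on `[0,1]`. -/
noncomputable def phiMap (p₁ p₂ : ℝ) (ω : ℝ) : ℝ :=
  if ω < p₁ then ω / p₁ else (ω - p₁) / p₂

/-- The skew product `S(x,ω) = (T_{α(ω)}(x), φ(ω))`. -/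
noncomputable def skew (α β p₁ p₂ : ℝ) (z : ℝ × ℝ) : ℝ × ℝ :=
  (lsv (sel α β p₁ z.2) z.1, phiMap p₁ p₂ z.2)

/-- Random iterates: `randIter n ω = T_ω^n = T_{α(φ^{n-1}ω)} ∘ ⋯ ∘ T_{α(ω)}`. -/
noncomputable def randIter (α β p₁ p₂ : ℝ) : ℕ → ℝ → ℝ → ℝ
  | 0, _, x => x
  | n + 1, ω, x => randIter α β p₁ p₂ n (phiMap p₁ p₂ ω) (lsv (sel α β p₁ ω) x)

/-- The deterministic backward orbit `x_n^γ`: `x₀^γ = 1`, `x₁^γ = 1/2`, and for `n ≥ 2`,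
`x_n^γ` is the (unique) point of `(0,1/2]` with `T_γ(x_n^γ) = x_{n-1}^γ`. -/
def IsDetBackOrbit (γ : ℝ) (x : ℕ → ℝ) : Prop :=
  x 0 = 1 ∧ x 1 = 1 / 2 ∧
    ∀ n, 2 ≤ n → x n ∈ Set.Ioc (0 : ℝ) (1 / 2) ∧ lsv γ (x n) = x (n - 1)

/-- The random backward orbit `x_n(ω)`: `x₀(ω) = 1`, `x₁(ω) = 1/2`, and for `n ≥ 2`,
`x_n(ω)` is the (unique) point of `(0,1/2]` with `T_{α(ω)}(x_n(ω)) = x_{n-1}(φω)`. -/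
def IsRandBackOrbit (α β p₁ p₂ : ℝ) (X : ℕ → ℝ → ℝ) : Prop :=
  (∀ ω, X 0 ω = 1) ∧ (∀ ω, X 1 ω = 1 / 2) ∧
    ∀ n, 2 ≤ n → ∀ ω, X n ω ∈ Set.Ioc (0 : ℝ) (1 / 2) ∧
      lsv (sel α β p₁ ω) (X n ω) = X (n - 1) (phiMap p₁ p₂ ω)

/-- The points `x'_n(ω)`: `x'₀(ω) = 1`, `x'₁(ω) = 3/4`, and
`x'_n(ω) = (x_n(φω) + 1)/2` for `n ≥ 2`. -/
def IsRandBackOrbitPrime (p₁ p₂ : ℝ) (X X' : ℕ → ℝ → ℝ) : Prop :=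
  (∀ ω, X' 0 ω = 1) ∧ (∀ ω, X' 1 ω = 3 / 4) ∧
    ∀ n, 2 ≤ n → ∀ ω, X' n ω = (X n (phiMap p₁ p₂ ω) + 1) / 2

/-- First return time of `(x,ω)` to `(1/2,1] × [0,1]` under the skew product. -/
noncomputable def returnTime (α β p₁ p₂ : ℝ) (x ω : ℝ) : ℕ :=
  sInf {k : ℕ | 1 ≤ k ∧ 1 / 2 < randIter α β p₁ p₂ k ω x}

lemma lsv_left_eq (γ x : ℝ) (hx0 : 0 ≤ x) (hx : x ≤ 1/2) :
    lsv γ x = x * (1 + (2*x)^γ) := by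
  rw [lsv, if_pos (by linarith), Real.mul_rpow (by norm_num) hx0]

lemma lsv_lt (γ : ℝ) (hγ : 0 < γ) {x y : ℝ} (hx : 0 < x) (hxy : x < y) (hy : y ≤ 1/2) :
    lsv γ x < lsv γ y := by
  rw [lsv_left_eq γ x hx.le (by linarith), lsv_left_eq γ y (by linarith) hy]
  have h1 : (2*x)^γ ≤ (2*y)^γ :=
    Real.rpow_le_rpow (by linarith) (by linarith) hγ.le
  have h2 : (0:ℝ) < 1 + (2*x)^γ := by positivity
  nlinarith [Real.rpow_nonneg (by linarith : (0:ℝ) ≤ 2*y) γ]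

lemma le_of_lsv_le (γ : ℝ) (hγ : 0 < γ) {x y : ℝ} (hx : 0 < x) (hx2 : x ≤ 1/2)
    (hy : 0 < y) (_hy2 : y ≤ 1/2) (h : lsv γ x ≤ lsv γ y) : x ≤ y := by
  by_contra hlt
  push_neg at hlt
  exact absurd h (not_le.mpr (lsv_lt γ hγ hy hlt hx2))

lemma lsv_anti (γ γ' : ℝ) (hγ : 0 < γ) (hγγ' : γ ≤ γ') {x : ℝ} (hx : 0 < x) (hx2 : x ≤ 1/2) :
    lsv γ' x ≤ lsv γ x := by
  rw [lsv_left_eq _ _ hx.le hx2, lsv_left_eq _ _ hx.le hx2]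
  have h : (2*x)^γ' ≤ (2*x)^γ :=
    Real.rpow_le_rpow_of_exponent_ge (by linarith) (by linarith) hγγ'
  exact mul_le_mul_of_nonneg_left (by linarith) hx.le

lemma phiMap_mem {p₁ p₂ : ℝ} (hp₁ : 0 < p₁) (hp₂ : 0 < p₂) (hp : p₁ + p₂ = 1)
    {ω : ℝ} (hω : ω ∈ Set.Icc (0:ℝ) 1) : phiMap p₁ p₂ ω ∈ Set.Icc (0:ℝ) 1 := by
  obtain ⟨h0, h1⟩ := hω
  unfold phiMap
  split_ifs with h
  · exact ⟨by positivity, by rw [div_le_one hp₁]; linarith⟩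
  · push_neg at h
    exact ⟨div_nonneg (by linarith) hp₂.le, by rw [div_le_one hp₂]; linarith⟩

/-- For `0 < α < β` and `p₁, p₂ > 0` with `p₁ + p₂ = 1`: for all `n ≥ 1`
and all `ω ∈ [0,1]`, `x_n^α ≤ x_n(ω) ≤ x_n^β`. -/
theorem randBackOrbit_between (α β p₁ p₂ : ℝ) (hα : 0 < α) (hαβ : α < β)
    (hp₁ : 0 < p₁) (hp₂ : 0 < p₂) (hp : p₁ + p₂ = 1)
    (X : ℕ → ℝ → ℝ) (hX : IsRandBackOrbit α β p₁ p₂ X)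
    (xa xb : ℕ → ℝ) (hxa : IsDetBackOrbit α xa) (hxb : IsDetBackOrbit β xb) :
    ∀ n : ℕ, 1 ≤ n → ∀ ω ∈ Set.Icc (0 : ℝ) 1, xa n ≤ X n ω ∧ X n ω ≤ xb n := by
  obtain ⟨hX0, hX1, hXn⟩ := hX
  obtain ⟨ha0, ha1, han⟩ := hxa
  obtain ⟨hb0, hb1, hbn⟩ := hxb
  intro n hn
  induction n, hn using Nat.le_induction with
  | base =>
    intro ω hω
    rw [hX1 ω, ha1, hb1]
    exact ⟨le_refl _, le_refl _⟩
  | succ n hn ih =>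
    intro ω hω
    have h2 : 2 ≤ n + 1 := by omega
    obtain ⟨hXmem, hXeq⟩ := hXn (n+1) h2 ω
    obtain ⟨hamem, haeq⟩ := han (n+1) h2
    obtain ⟨hbmem, hbeq⟩ := hbn (n+1) h2
    simp only [Nat.add_sub_cancel] at hXeq haeq hbeq
    have hφ : phiMap p₁ p₂ ω ∈ Set.Icc (0:ℝ) 1 := phiMap_mem hp₁ hp₂ hp hω
    obtain ⟨iha, ihb⟩ := ih (phiMap p₁ p₂ ω) hφ
    set γω := sel α β p₁ ω with hγωdef
    have hγα : α ≤ γω := by rw [hγωdef, sel]; split_ifs <;> linarith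
    have hγβ : γω ≤ β := by rw [hγωdef, sel]; split_ifs <;> linarith
    have hγ0 : 0 < γω := lt_of_lt_of_le hα hγα
    constructor
    · apply le_of_lsv_le α (by linarith) hamem.1 hamem.2 hXmem.1 hXmem.2
      calc lsv α (xa (n+1)) = xa n := haeq
        _ ≤ X n (phiMap p₁ p₂ ω) := iha
        _ = lsv γω (X (n+1) ω) := hXeq.symm
        _ ≤ lsv α (X (n+1) ω) := lsv_anti α γω (by linarith) hγα hXmem.1 hXmem.2
    · apply le_of_lsv_le γω hγ0 hXmem.1 hXmem.2 hbmem.1 hbmem.2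
      calc lsv γω (X (n+1) ω) = X n (phiMap p₁ p₂ ω) := hXeq
        _ ≤ xb n := ihb
        _ = lsv β (xb (n+1)) := hbeq.symm
        _ ≤ lsv γω (xb (n+1)) := lsv_anti γω β hγ0 hγβ hbmem.1 hbmem.2
end
end

section
/- Let 0 < α < β and p₁, p₂ > 0 with p₁ + p₂ = 1. Fix n ≥ 1 and a real number K₀ with 0 ≤ K₀ ≤ n−1. If ω ∈ [0,1] satisfies #{ j ∈ {0,1,…,n−1} : φ^j(ω) ∈ [0,p₁) } > K₀ (i.e., the symbol α occurs more than K₀ times among α(ω), α(φω), …, α(φ^{n−1}ω)), then x_n^α ≤ x_n(ω) ≤ x^α_{⌊K₀⌋}. -/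
noncomputable section

open Real MeasureTheory Set Filter

/-!
Each left branch `x ↦ x(1 + (2x)^γ)` is increasing on `[0,1/2]`, lies strictly above the
identity there, and decreases as `γ` grows. Pulling `x_{m-1}(φω) ≥ x^α_{m-1}` back along
`T_{α(ω)} ≤ T_α` gives `x_m(ω) ≥ x^α_m`. For the upper bound, `x_{m+1}(ω) ≤ x^α_k` where `k`
counts the `α`-steps among `ω, …, φ^{m-1}ω`: an `α`-step pulls back along `T_α` and advances
the index, a `β`-step only uses `x < T_β(x)`. Taking `m = n - 1` loses at most the last
`α`-step, so more than `K₀` of them among the first `n` still give `⌊K₀⌋ ≤ k`.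
-/

open Function Finset

lemma lsv_of_le_half (γ : ℝ) {x : ℝ} (hx₀ : 0 ≤ x) (hx : x ≤ 1 / 2) :
    lsv γ x = x * (1 + (2 * x) ^ γ) := by
  rw [lsv, if_pos hx, Real.mul_rpow (by norm_num) hx₀]

lemma lsv_half (γ : ℝ) : lsv γ (1 / 2) = 1 := by
  rw [lsv_of_le_half γ (by norm_num) le_rfl]
  norm_num

lemma lt_lsv (γ : ℝ) {x : ℝ} (hx : x ∈ Ioc (0 : ℝ) (1 / 2)) : x < lsv γ x := by
  obtain ⟨hx₀, hx⟩ := hx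
  rw [lsv_of_le_half γ hx₀.le hx]
  nlinarith [Real.rpow_pos_of_pos (show (0 : ℝ) < 2 * x by linarith) γ]

lemma strictMonoOn_lsv {γ : ℝ} (hγ : 0 ≤ γ) : StrictMonoOn (lsv γ) (Icc 0 (1 / 2)) := by
  rintro x ⟨hx₀, hx⟩ y ⟨hy₀, hy⟩ hxy
  rw [lsv_of_le_half γ hx₀ hx, lsv_of_le_half γ hy₀ hy]
  have : (2 * x) ^ γ ≤ (2 * y) ^ γ := Real.rpow_le_rpow (by linarith) (by linarith) hγ
  nlinarith [Real.rpow_nonneg (show (0 : ℝ) ≤ 2 * x by linarith) γ]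

lemma lsv_le_lsv_of_exponent_ge {α γ : ℝ} (hαγ : α ≤ γ) {x : ℝ}
    (hx : x ∈ Ioc (0 : ℝ) (1 / 2)) : lsv γ x ≤ lsv α x := by
  obtain ⟨hx₀, hx⟩ := hx
  rw [lsv_of_le_half γ hx₀.le hx, lsv_of_le_half α hx₀.le hx]
  have : (2 * x) ^ γ ≤ (2 * x) ^ α :=
    Real.rpow_le_rpow_of_exponent_ge (by linarith) (by linarith) hαγ
  nlinarith

lemma le_sel {α β : ℝ} (hαβ : α ≤ β) (p₁ ω : ℝ) : α ≤ sel α β p₁ ω := by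
  unfold sel
  split_ifs
  exacts [le_rfl, hαβ]

def alphaCount (p₁ p₂ : ℝ) : ℕ → ℝ → ℕ :=
  birkhoffSum (phiMap p₁ p₂) fun ω => if ω < p₁ then 1 else 0

lemma alphaCount_eq_card (p₁ p₂ : ℝ) (m : ℕ) (ω : ℝ) :
    alphaCount p₁ p₂ m ω = #{j ∈ range m | (phiMap p₁ p₂)^[j] ω < p₁} := by
  rw [alphaCount, birkhoffSum, card_filter]

lemma alphaCount_succ_le (p₁ p₂ : ℝ) (m : ℕ) (ω : ℝ) :
    alphaCount p₁ p₂ (m + 1) ω ≤ alphaCount p₁ p₂ m ω + 1 := by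
  rw [alphaCount, birkhoffSum_succ]
  split_ifs <;> omega

namespace IsDetBackOrbit

variable {γ : ℝ} {x : ℕ → ℝ}

lemma mem_Ioc (h : IsDetBackOrbit γ x) (m : ℕ) : x (m + 1) ∈ Ioc (0 : ℝ) (1 / 2) := by
  rcases m with _ | m
  · rw [h.2.1]
    norm_num
  · exact (h.2.2 (m + 2) (by omega)).1

lemma lsv_succ (h : IsDetBackOrbit γ x) (m : ℕ) : lsv γ (x (m + 1)) = x m := by
  rcases m with _ | m
  · rw [h.2.1, h.1, lsv_half]
  · exact (h.2.2 (m + 2) (by omega)).2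

protected lemma antitone (h : IsDetBackOrbit γ x) : Antitone x :=
  antitone_nat_of_succ_le fun m => by
    simpa only [h.lsv_succ] using (lt_lsv γ (h.mem_Ioc m)).le

end IsDetBackOrbit

namespace IsRandBackOrbit

variable {α β p₁ p₂ : ℝ} {X : ℕ → ℝ → ℝ} {xa : ℕ → ℝ}

lemma mem_Ioc (h : IsRandBackOrbit α β p₁ p₂ X) (m : ℕ) (ω : ℝ) :
    X (m + 1) ω ∈ Ioc (0 : ℝ) (1 / 2) := by
  rcases m with _ | m
  · rw [h.2.1]
    norm_num
  · exact (h.2.2 (m + 2) (by omega) ω).1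

lemma lsv_succ (h : IsRandBackOrbit α β p₁ p₂ X) (m : ℕ) (ω : ℝ) :
    lsv (sel α β p₁ ω) (X (m + 1) ω) = X m (phiMap p₁ p₂ ω) := by
  rcases m with _ | m
  · rw [h.2.1, h.1, lsv_half]
  · exact (h.2.2 (m + 2) (by omega) ω).2

lemma detBackOrbit_le (hα : 0 ≤ α) (hαβ : α ≤ β) (hX : IsRandBackOrbit α β p₁ p₂ X)
    (hxa : IsDetBackOrbit α xa) (m : ℕ) (ω : ℝ) : xa m ≤ X m ω := by
  induction m generalizing ω with
  | zero => rw [hX.1, hxa.1]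
  | succ m ih =>
    have hXm := hX.mem_Ioc m ω
    refine (strictMonoOn_lsv hα).le_iff_le (Ioc_subset_Icc_self (hxa.mem_Ioc m))
      (Ioc_subset_Icc_self hXm) |>.1 ?_
    calc lsv α (xa (m + 1)) = xa m := hxa.lsv_succ m
      _ ≤ X m (phiMap p₁ p₂ ω) := ih _
      _ = lsv (sel α β p₁ ω) (X (m + 1) ω) := (hX.lsv_succ m ω).symm
      _ ≤ lsv α (X (m + 1) ω) := lsv_le_lsv_of_exponent_ge (le_sel hαβ p₁ ω) hXm

lemma le_detBackOrbit_alphaCount (hα : 0 ≤ α) (hX : IsRandBackOrbit α β p₁ p₂ X)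
    (hxa : IsDetBackOrbit α xa) (m : ℕ) (ω : ℝ) :
    X (m + 1) ω ≤ xa (alphaCount p₁ p₂ m ω) := by
  induction m generalizing ω with
  | zero => rw [hX.2.1, alphaCount, birkhoffSum_zero, hxa.1]; norm_num
  | succ m ih =>
    have hXm := hX.mem_Ioc (m + 1) ω
    have hpull := (hX.lsv_succ (m + 1) ω).trans_le (ih (phiMap p₁ p₂ ω))
    rw [alphaCount, birkhoffSum_succ', ← alphaCount]
    by_cases hω : ω < p₁
    · rw [sel, if_pos hω, ← hxa.lsv_succ] at hpull
      rw [if_pos hω, add_comm 1]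
      exact (strictMonoOn_lsv hα).le_iff_le (Ioc_subset_Icc_self hXm)
        (Ioc_subset_Icc_self (hxa.mem_Ioc _)) |>.1 hpull
    · rw [if_neg hω, zero_add]
      exact (lt_lsv _ hXm).le.trans hpull

end IsRandBackOrbit

theorem randBackOrbit_of_many_alpha_general (α β p₁ p₂ : ℝ) (hα : 0 < α) (hαβ : α < β)
    (X : ℕ → ℝ → ℝ) (hX : IsRandBackOrbit α β p₁ p₂ X)
    (xa : ℕ → ℝ) (hxa : IsDetBackOrbit α xa)
    (n : ℕ) (K₀ : ℝ)
    (ω : ℝ)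
    (hcount : K₀ < (((Finset.range n).filter
      (fun j => 0 ≤ (phiMap p₁ p₂)^[j] ω ∧ (phiMap p₁ p₂)^[j] ω < p₁)).card : ℝ)) :
    xa n ≤ X n ω ∧ X n ω ≤ xa ⌊K₀⌋₊ := by
  refine ⟨hX.detBackOrbit_le hα.le hαβ.le hxa n ω, ?_⟩
  have hcount : K₀ < alphaCount p₁ p₂ n ω := by
    refine hcount.trans_le (Nat.cast_le.2 ?_)
    rw [alphaCount_eq_card]
    exact card_le_card (monotone_filter_right _ fun _ _ => And.right)
  rcases n with _ | m
  · have hK₀ : K₀ < 0 := by simpa [alphaCount] using hcount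
    rw [Nat.floor_eq_zero.2 (by linarith), hX.1, hxa.1]
  · have hfloor : ⌊K₀⌋₊ ≤ alphaCount p₁ p₂ m ω :=
      Nat.lt_succ_iff.1 <| (Nat.floor_lt' (Nat.succ_ne_zero _)).2 <|
        hcount.trans_le (by exact_mod_cast alphaCount_succ_le p₁ p₂ m ω)
    exact (hX.le_detBackOrbit_alphaCount hα.le hxa m ω).trans (hxa.antitone hfloor)

/-- Let `0 < α < β`, `p₁, p₂ > 0` with `p₁ + p₂ = 1`, `n ≥ 1` and
`0 ≤ K₀ ≤ n − 1`. If the symbol `α` occurs more than `K₀` times among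
`α(ω), α(φω), …, α(φ^{n−1}ω)`, then `x_n^α ≤ x_n(ω) ≤ x^α_{⌊K₀⌋}`. -/
theorem randBackOrbit_of_many_alpha (α β p₁ p₂ : ℝ) (hα : 0 < α) (hαβ : α < β)
    (hp₁ : 0 < p₁) (hp₂ : 0 < p₂) (hp : p₁ + p₂ = 1)
    (X : ℕ → ℝ → ℝ) (hX : IsRandBackOrbit α β p₁ p₂ X)
    (xa : ℕ → ℝ) (hxa : IsDetBackOrbit α xa)
    (n : ℕ) (hn : 1 ≤ n) (K₀ : ℝ) (hK₀ : 0 ≤ K₀) (hK₀' : K₀ ≤ (n : ℝ) - 1)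
    (ω : ℝ) (hω : ω ∈ Set.Icc (0 : ℝ) 1)
    (hcount : K₀ < (((Finset.range n).filter
      (fun j => 0 ≤ (phiMap p₁ p₂)^[j] ω ∧ (phiMap p₁ p₂)^[j] ω < p₁)).card : ℝ)) :
    xa n ≤ X n ω ∧ X n ω ≤ xa ⌊K₀⌋₊ :=
  randBackOrbit_of_many_alpha_general α β p₁ p₂ hα hαβ X hX xa hxa n K₀ ω hcount
end
end

section
/- Let β > 1 and let f(x) = x(1 + 2^β x^β) be the left branch of the LSV map T_β. Then the Schwarzian derivative (Sf)(x) = f'''(x)/f'(x) − (3/2)·(f''(x)/f'(x))² is strictly positive for every x in the open interval (0, (1/2)·((β−1)/((1+β)(1+β/2)))^{1/β}). -/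
noncomputable section

open Real MeasureTheory Set Filter

/-! With `c = 2^β` we have `f' = 1 + c(β+1)x^β`, `f'' = cβ(β+1)x^(β-1)`,
`f''' = cβ(β+1)(β-1)x^(β-2)`, and `f''' f' - (3/2) f''^2` factors as
`cβ(β+1)x^(β-2) ((β-1) - c(β+1)(1+β/2)x^β)`. The upper bound on `x` is exactly the condition
`c(β+1)(1+β/2)x^β < β-1` making the last factor positive. -/

theorem deriv_lsvLeft (γ : ℝ) {x : ℝ} (hx : 0 < x) :
    deriv (lsvLeft γ) x = 1 + 2 ^ γ * (γ + 1) * x ^ γ := by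
  have hpow : HasDerivAt (fun y : ℝ => y ^ γ) (γ * x ^ (γ - 1)) x :=
    hasDerivAt_rpow_const (Or.inl hx.ne')
  have hmul : HasDerivAt (lsvLeft γ)
      (1 * (1 + 2 ^ γ * x ^ γ) + x * (2 ^ γ * (γ * x ^ (γ - 1)))) x :=
    (hasDerivAt_id' x).mul ((hpow.const_mul (2 ^ γ)).const_add 1)
  have hx_rpow : x * x ^ (γ - 1) = x ^ γ := by
    rw [mul_comm, ← rpow_add_one hx.ne', sub_add_cancel]
  rw [hmul.deriv, one_mul]
  linear_combination (2 ^ γ * γ) * hx_rpow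

theorem deriv_deriv_lsvLeft (γ : ℝ) {x : ℝ} (hx : 0 < x) :
    deriv (deriv (lsvLeft γ)) x = 2 ^ γ * (γ + 1) * γ * x ^ (γ - 1) := by
  have h : deriv (lsvLeft γ) =ᶠ[nhds x] fun y => 1 + 2 ^ γ * (γ + 1) * y ^ γ :=
    eventually_of_mem (Ioi_mem_nhds hx) fun y hy => deriv_lsvLeft γ hy
  rw [h.deriv_eq, deriv_const_add', deriv_const_mul_field', deriv_rpow_const']
  ring

theorem deriv_deriv_deriv_lsvLeft (γ : ℝ) {x : ℝ} (hx : 0 < x) :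
    deriv (deriv (deriv (lsvLeft γ))) x = 2 ^ γ * (γ + 1) * γ * (γ - 1) * x ^ (γ - 2) := by
  have h : deriv (deriv (lsvLeft γ)) =ᶠ[nhds x] fun y => 2 ^ γ * (γ + 1) * γ * y ^ (γ - 1) :=
    eventually_of_mem (Ioi_mem_nhds hx) fun y hy => deriv_deriv_lsvLeft γ hy
  rw [h.deriv_eq, deriv_const_mul_field', deriv_rpow_const']
  ring_nf

theorem div_sub_mul_div_sq_eq (d₁ d₂ d₃ : ℝ) (h : d₁ ≠ 0) :
    d₃ / d₁ - 3 / 2 * (d₂ / d₁) ^ 2 = (d₃ * d₁ - 3 / 2 * d₂ ^ 2) / d₁ ^ 2 := by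
  field_simp

theorem schwarzian_numerator_rpow_branch (c γ : ℝ) {x : ℝ} (hx : 0 < x) :
    c * (γ + 1) * γ * (γ - 1) * x ^ (γ - 2) * (1 + c * (γ + 1) * x ^ γ)
        - 3 / 2 * (c * (γ + 1) * γ * x ^ (γ - 1)) ^ 2 =
      c * γ * (γ + 1) * x ^ (γ - 2) * (γ - 1 - c * (γ + 1) * (1 + γ / 2) * x ^ γ) := by
  have hsq : (x ^ (γ - 1)) ^ 2 = x ^ (γ - 2) * x ^ γ := by
    rw [sq, ← rpow_add hx, ← rpow_add hx]
    ring_nf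
  linear_combination (-3 / 2 * (c * (γ + 1) * γ) ^ 2) * hsq

theorem mul_rpow_lt_of_mul_lt_rpow_inv {c x q p : ℝ} (hc : 0 ≤ c) (hx : 0 ≤ x) (hq : 0 ≤ q)
    (hp : 0 < p) (h : c * x < q ^ p⁻¹) : c ^ p * x ^ p < q := by
  rw [← mul_rpow hc hx]
  exact (lt_rpow_inv_iff_of_pos (by positivity) hq hp).1 h

/-- For `β > 1` and the left branch `f(x) = x(1 + 2^β x^β)`, the
Schwarzian derivative of `f` is strictly positive on
`(0, (1/2)((β−1)/((1+β)(1+β/2)))^{1/β})`. -/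
theorem left_branch_positive_schwarzian (β : ℝ) (hβ : 1 < β) :
    ∀ x ∈ Set.Ioo (0 : ℝ)
        ((1 / 2) * ((β - 1) / ((1 + β) * (1 + β / 2))) ^ (1 / β)),
      0 < deriv (deriv (deriv (lsvLeft β))) x / deriv (lsvLeft β) x -
        (3 / 2) * (deriv (deriv (lsvLeft β)) x / deriv (lsvLeft β) x) ^ 2 := by
  rintro x ⟨hx, hx_lt⟩
  have hβ₀ : 0 < β := by linarith
  have hden : 0 < (1 + β) * (1 + β / 2) := by positivity
  have hbound : 2 ^ β * x ^ β < (β - 1) / ((1 + β) * (1 + β / 2)) :=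
    mul_rpow_lt_of_mul_lt_rpow_inv zero_le_two hx.le (div_pos (by linarith) hden).le hβ₀
      (by rw [← one_div]; linarith)
  have hgap : 0 < β - 1 - 2 ^ β * (β + 1) * (1 + β / 2) * x ^ β := by
    rw [lt_div_iff₀ hden] at hbound
    linarith
  have hderiv_pos : 0 < 1 + 2 ^ β * (β + 1) * x ^ β := by positivity
  rw [deriv_deriv_deriv_lsvLeft β hx, deriv_deriv_lsvLeft β hx, deriv_lsvLeft β hx,
    div_sub_mul_div_sq_eq _ _ _ hderiv_pos.ne', schwarzian_numerator_rpow_branch _ _ hx]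
  positivity
end
end
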